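/- Let ℌ_A, ℌ_B, and ℌ be Hilbert spaces, let A be a linear relation from ℌ_A to ℌ, and let B be a linear relation from ℌ_B to ℌ. Then there exists a linear relation W from ℌ_A to ℌ_B such that A = BW if and only if ran A ⊆ ran B and mul B ⊆ mul A. -/

import Mathlib

open scoped ComplexOrder

set_option synthInstance.maxHeartbeats 1000000
set_option maxHeartbeats 1000000

noncomputable section

variable {E F G : Type*}

section Basic
variable [AddCommGroup E] [Module ℂ E] [AddCommGroup F] [Module ℂ F]
  [AddCommGroup G] [Module ℂ G]

/-- The domain of a linear relation. -/
def relDom (R : Submodule ℂ (E × F)) : Set E := Prod.fst '' (R : Set (E × F))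

/-- The range of a linear relation. -/
def relRan (R : Submodule ℂ (E × F)) : Set F := Prod.snd '' (R : Set (E × F))

/-- The kernel of a linear relation. -/
def relKer (R : Submodule ℂ (E × F)) : Submodule ℂ E where
  carrier := {f | (f, (0 : F)) ∈ R}
  add_mem' := fun ha hb => by simpa using R.add_mem ha hb
  zero_mem' := by exact R.zero_mem
  smul_mem' := fun c _ ha => by simpa using R.smul_mem c ha

/-- The multivalued part of a linear relation. -/
def relMul (R : Submodule ℂ (E × F)) : Submodule ℂ F where
  carrier := {g | ((0 : E), g) ∈ R}
  add_mem' := fun ha hb => by simpa using R.add_mem ha hb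
  zero_mem' := by exact R.zero_mem
  smul_mem' := fun c _ ha => by simpa using R.smul_mem c ha

/-- The product (composition) `S R` of two linear relations. -/
def relComp (S : Submodule ℂ (F × G)) (R : Submodule ℂ (E × F)) :
    Submodule ℂ (E × G) where
  carrier := {p | ∃ φ : F, (p.1, φ) ∈ R ∧ (φ, p.2) ∈ S}
  add_mem' := by
    rintro p q ⟨φ, h1, h2⟩ ⟨ψ, h3, h4⟩
    exact ⟨φ + ψ, by simpa using R.add_mem h1 h3, by simpa using S.add_mem h2 h4⟩
  zero_mem' := ⟨0, R.zero_mem, S.zero_mem⟩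
  smul_mem' := by
    rintro c p ⟨φ, h1, h2⟩
    exact ⟨c • φ, by simpa using R.smul_mem c h1, by simpa using S.smul_mem c h2⟩

/-- The inverse of a linear relation. -/
def relInv (R : Submodule ℂ (E × F)) : Submodule ℂ (F × E) where
  carrier := {p | (p.2, p.1) ∈ R}
  add_mem' := fun ha hb => by simpa using R.add_mem ha hb
  zero_mem' := by exact R.zero_mem
  smul_mem' := fun c _ ha => by simpa using R.smul_mem c ha

/-- The scalar multiple `c H = {{f, c f'} : {f, f'} ∈ H}` of a linear relation. -/
def relSmul (c : ℝ) (R : Submodule ℂ (E × F)) : Submodule ℂ (E × F) where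
  carrier := {p | ∃ f', (p.1, f') ∈ R ∧ p.2 = (c : ℂ) • f'}
  add_mem' := by
    rintro p q ⟨f, h1, h2⟩ ⟨g, h3, h4⟩
    refine ⟨f + g, by simpa using R.add_mem h1 h3, ?_⟩
    simp [h2, h4, smul_add]
  zero_mem' := ⟨0, R.zero_mem, by simp⟩
  smul_mem' := by
    rintro a p ⟨f, h1, h2⟩
    refine ⟨a • f, by simpa using R.smul_mem a h1, ?_⟩
    rw [Prod.smul_snd, h2, smul_comm]

/-- The relation `H + x = {{f, f' + x f} : {f, f'} ∈ H}`. -/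
def relAddScalar (R : Submodule ℂ (E × E)) (x : ℝ) : Submodule ℂ (E × E) where
  carrier := {p | ∃ f', (p.1, f') ∈ R ∧ p.2 = f' + (x : ℂ) • p.1}
  add_mem' := by
    rintro p q ⟨f, h1, h2⟩ ⟨g, h3, h4⟩
    refine ⟨f + g, by simpa using R.add_mem h1 h3, ?_⟩
    simp only [Prod.fst_add, Prod.snd_add, h2, h4, smul_add]
    abel
  zero_mem' := ⟨0, R.zero_mem, by simp⟩
  smul_mem' := by
    rintro a p ⟨f, h1, h2⟩
    refine ⟨a • f, by simpa using R.smul_mem a h1, ?_⟩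
    rw [Prod.smul_snd, Prod.smul_fst, h2, smul_add, smul_comm]

end Basic

section Hilbert

variable [NormedAddCommGroup E] [InnerProductSpace ℂ E]
  [NormedAddCommGroup F] [InnerProductSpace ℂ F]
  [NormedAddCommGroup G] [InnerProductSpace ℂ G]

/-- The graph of a bounded everywhere defined operator, as a linear relation. -/
def graphRel (W : E →L[ℂ] F) : Submodule ℂ (E × F) :=
  LinearMap.graph (W : E →ₗ[ℂ] F)

/-- The adjoint of a linear relation:
`H* = {{k, k'} : ⟨f', k⟩ = ⟨f, k'⟩ for all {f, f'} ∈ H}`. -/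
def relAdj (R : Submodule ℂ (E × F)) : Submodule ℂ (F × E) where
  carrier := {q | ∀ p ∈ R, (inner ℂ p.2 q.1 : ℂ) = inner ℂ p.1 q.2}
  add_mem' := by
    intro a b ha hb p hp
    simp only [Prod.fst_add, Prod.snd_add, inner_add_right]
    rw [ha p hp, hb p hp]
  zero_mem' := by intro p hp; simp
  smul_mem' := by
    intro c q hq p hp
    simp only [Prod.smul_fst, Prod.smul_snd, inner_smul_right]
    rw [hq p hp]

/-- A linear relation in a Hilbert space is nonnegative if `⟨h', h⟩ ≥ 0`
for all `{h, h'}` in the relation. -/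
def relNonneg (R : Submodule ℂ (E × E)) : Prop :=
  ∀ p ∈ R, 0 ≤ (inner ℂ p.2 p.1 : ℂ)

/-- A linear relation in a Hilbert space is selfadjoint if `H = H*`. -/
def relSelfAdj (R : Submodule ℂ (E × E)) : Prop := relAdj R = R

/-- The operator part `Hₛ = {{f, P f'} : {f, f'} ∈ H}` of a linear relation,
where `P` is the orthogonal projection onto `(mul H)ᗮ`. -/
def opPart [CompleteSpace F] (R : Submodule ℂ (E × F)) : Submodule ℂ (E × F) where
  carrier := {p | ∃ f' : F, (p.1, f') ∈ R ∧
      p.2 = (Submodule.orthogonalProjection (relMul R)ᗮ f' : F)}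
  add_mem' := by
    rintro p q ⟨f, h1, h2⟩ ⟨g, h3, h4⟩
    refine ⟨f + g, by simpa using R.add_mem h1 h3, ?_⟩
    simp [h2, h4]
  zero_mem' := ⟨0, R.zero_mem, by simp⟩
  smul_mem' := by
    rintro c p ⟨f, h1, h2⟩
    refine ⟨c • f, by simpa using R.smul_mem c h1, ?_⟩
    simp [h2]

/-- The ordering of nonnegative selfadjoint relations: `H₁ ≤ H₂` iff, with `Kᵢ`
the (unique) nonnegative selfadjoint square root of `Hᵢ`, one has
`dom K₂ ⊆ dom K₁` and `‖(K₁)ₛ h‖ ≤ ‖(K₂)ₛ h‖` for all `h ∈ dom K₂`. -/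
def RelLE [CompleteSpace E] (H₁ H₂ : Submodule ℂ (E × E)) : Prop :=
  ∃ K₁ K₂ : Submodule ℂ (E × E),
    relNonneg K₁ ∧ relSelfAdj K₁ ∧ relComp K₁ K₁ = H₁ ∧
    relNonneg K₂ ∧ relSelfAdj K₂ ∧ relComp K₂ K₂ = H₂ ∧
    relDom K₂ ⊆ relDom K₁ ∧
    ∀ h k₁ k₂, (h, k₁) ∈ opPart K₁ → (h, k₂) ∈ opPart K₂ → ‖k₁‖ ≤ ‖k₂‖

end Hilbert


section Factorization

variable [AddCommGroup E] [Module ℂ E] [AddCommGroup F] [Module ℂ F]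
  [AddCommGroup G] [Module ℂ G]

theorem relRan_relComp_subset (S : Submodule ℂ (F × G)) (R : Submodule ℂ (E × F)) :
    relRan (relComp S R) ⊆ relRan S := by
  rintro g ⟨⟨f, g⟩, ⟨φ, -, hS⟩, rfl⟩
  exact ⟨(φ, g), hS, rfl⟩

theorem relMul_le_relMul_relComp (S : Submodule ℂ (F × G)) (R : Submodule ℂ (E × F)) :
    relMul S ≤ relMul (relComp S R) :=
  fun _ hg => ⟨0, R.zero_mem, hg⟩

theorem le_relComp_relComp_relInv {A : Submodule ℂ (E × G)} {B : Submodule ℂ (F × G)}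
    (hran : relRan A ⊆ relRan B) : A ≤ relComp B (relComp (relInv B) A) := by
  rintro ⟨f, g⟩ hA
  obtain ⟨⟨h, g⟩, hB, rfl⟩ := hran ⟨(f, g), hA, rfl⟩
  exact ⟨h, ⟨g, hA, hB⟩, hB⟩

/-- `B⁻¹` may send `g'` to several `h`, and `B` may send `h` back to another `g`;
the difference `g - g'` lies in `mul B`, which `mul A` absorbs. -/
theorem relComp_relComp_relInv_le {A : Submodule ℂ (E × G)} {B : Submodule ℂ (F × G)}
    (hmul : relMul B ≤ relMul A) : relComp B (relComp (relInv B) A) ≤ A := by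
  rintro ⟨f, g⟩ ⟨h, ⟨g', hA, hBg'⟩, hBg⟩
  have hdiff : g - g' ∈ relMul A :=
    hmul (show ((0 : F), g - g') ∈ B by simpa using B.sub_mem hBg hBg')
  simpa using A.add_mem hA hdiff

end Factorization

theorem stmt_7_general {𝓗A 𝓗B 𝓗 : Type*}
    [NormedAddCommGroup 𝓗A] [InnerProductSpace ℂ 𝓗A]
    [NormedAddCommGroup 𝓗B] [InnerProductSpace ℂ 𝓗B]
    [NormedAddCommGroup 𝓗] [InnerProductSpace ℂ 𝓗]
    (A : Submodule ℂ (𝓗A × 𝓗)) (B : Submodule ℂ (𝓗B × 𝓗)) :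
    (∃ W : Submodule ℂ (𝓗A × 𝓗B), A = relComp B W) ↔
      relRan A ⊆ relRan B ∧ relMul B ≤ relMul A := by
  constructor
  · rintro ⟨W, rfl⟩
    exact ⟨relRan_relComp_subset B W, relMul_le_relMul_relComp B W⟩
  · rintro ⟨hran, hmul⟩
    exact ⟨relComp (relInv B) A,
      le_antisymm (le_relComp_relComp_relInv hran) (relComp_relComp_relInv_le hmul)⟩

theorem stmt_7 {𝓗A 𝓗B 𝓗 : Type*}
    [NormedAddCommGroup 𝓗A] [InnerProductSpace ℂ 𝓗A] [CompleteSpace 𝓗A]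
    [NormedAddCommGroup 𝓗B] [InnerProductSpace ℂ 𝓗B] [CompleteSpace 𝓗B]
    [NormedAddCommGroup 𝓗] [InnerProductSpace ℂ 𝓗] [CompleteSpace 𝓗]
    (A : Submodule ℂ (𝓗A × 𝓗)) (B : Submodule ℂ (𝓗B × 𝓗)) :
    (∃ W : Submodule ℂ (𝓗A × 𝓗B), A = relComp B W) ↔
      relRan A ⊆ relRan B ∧ relMul B ≤ relMul A :=
  stmt_7_general A B
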